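/- arXiv:1512.04612 — 3 statements merged into one kernel-verified Lean document; each statement's English description precedes it below -/
import Mathlib

section
/- For any doubly stochastic matrix M (a square matrix of nonnegative real numbers each of whose rows and columns sums to 1) of size n, there exists a permutation π of {1,...,n} such that M_{i,π(i)} > 0 for all i. -/
open Finset Matrix

/-- By Birkhoff's theorem `M` is a convex combination of permutation matrices; any permutation
carrying positive weight has its support inside that of `M`. -/
theorem exists_perm_forall_pos_of_mem_doublyStochastic {R ι : Type*} [Field R] [LinearOrder R]
    [IsStrictOrderedRing R] [Fintype ι] [DecidableEq ι] {M : Matrix ι ι R}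
    (hM : M ∈ doublyStochastic R ι) : ∃ σ : Equiv.Perm ι, ∀ i, 0 < M i (σ i) := by
  obtain ⟨w, hw_nonneg, hw_sum, rfl⟩ := exists_eq_sum_perm_of_mem_doublyStochastic hM
  obtain ⟨σ, -, hσ⟩ : ∃ σ ∈ univ, (0 : R) < w σ :=
    exists_lt_of_sum_lt (by simp [hw_sum])
  refine ⟨σ, fun i => hσ.trans_le ?_⟩
  calc w σ = (w σ • σ.permMatrix R) i (σ i) := by simp [Equiv.toPEquiv_apply]
    _ ≤ ∑ τ, (w τ • τ.permMatrix R) i (σ i) :=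
        single_le_sum (f := fun τ => (w τ • τ.permMatrix R) i (σ i))
          (fun τ _ => smul_nonneg (hw_nonneg τ)
            (nonneg_of_mem_doublyStochastic permMatrix_mem_doublyStochastic))
          (mem_univ σ)
    _ = (∑ τ, w τ • τ.permMatrix R) i (σ i) := (Matrix.sum_apply ..).symm

/-- **Mirsky's lemma**: every doubly stochastic matrix has a positive entry
in every position of some permutation. -/
theorem mirsky_doubly_stochastic {n : ℕ} (M : Matrix (Fin n) (Fin n) ℝ)
    (hnonneg : ∀ i j, 0 ≤ M i j)
    (hrow : ∀ i, ∑ j, M i j = 1)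
    (hcol : ∀ j, ∑ i, M i j = 1) :
    ∃ π : Equiv.Perm (Fin n), ∀ i, 0 < M i (π i) :=
  exists_perm_forall_pos_of_mem_doublyStochastic
    (mem_doublyStochastic_iff_sum.2 ⟨hnonneg, hrow, hcol⟩)
end

section
/- Let f : S^1 → S^1 be a continuous odd map (f(−x) = −f(x)). Then the degree of f is odd; in particular f is not null-homotopic. -/
/-!
Lift `f` along the covering `x ↦ exp(2πix)` of the circle to `F : ℝ → ℝ` with
`F (x + 1) = F x + d`. Since `f` is odd, `x ↦ F (x + 1/2)` and `x ↦ F x + 1/2 + k` lift the same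
map for a suitable integer `k`, hence coincide by uniqueness of lifts; going around the circle
twice gives `d = 2k + 1`. A null-homotopic map lifts through the covering by homotopy lifting, so
it would have a lift with `d = 0`.
-/

open Real Complex Function

local notation "S¹" => Metric.sphere (0 : ℂ) 1

noncomputable def circleCover (x : ℝ) : S¹ :=
  ⟨exp (2 * π * x * I), by simp [norm_exp]⟩

@[simp] lemma coe_circleCover (x : ℝ) : (circleCover x : ℂ) = exp (2 * π * x * I) := rfl

lemma isCoveringMap_circleCover : IsCoveringMap circleCover := by
  have h : circleCover = (Homeomorph.refl Circle : Circle ≃ₜ S¹) ∘ Circle.exp ∘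
      Homeomorph.mulLeft₀ (2 * π) (by positivity) := by
    ext x
    simp [Circle.coe_exp]
  rw [h]
  exact (Circle.isCoveringMap_exp.homeomorph_comp _).comp_homeomorph _

lemma circleCover_surjective : Surjective circleCover := by
  intro z
  obtain ⟨t, ht⟩ := Circle.exp_surjective (z : Circle)
  refine ⟨t / (2 * π), Subtype.ext ?_⟩
  rw [coe_circleCover, ← congrArg Subtype.val ht, Circle.coe_exp]
  congr 1
  push_cast
  field_simp

lemma circleCover_eq_circleCover_iff {x y : ℝ} :
    circleCover x = circleCover y ↔ ∃ n : ℤ, x = y + n := by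
  rw [← Subtype.coe_inj, coe_circleCover, coe_circleCover, exp_eq_exp_iff_exists_int]
  refine exists_congr fun n ↦ ⟨fun h ↦ ?_, fun h ↦ by rw [h]; push_cast; ring⟩
  have h_im : 2 * π * x = 2 * π * y + n * (2 * π) := by simpa using congrArg im h
  exact mul_left_cancel₀ two_pi_pos.ne' (by linarith)

lemma circleCover_add_int (x : ℝ) (n : ℤ) : circleCover (x + n) = circleCover x :=
  circleCover_eq_circleCover_iff.2 ⟨n, rfl⟩

lemma circleCover_add_half (x : ℝ) : circleCover (x + 1 / 2) = -circleCover x := by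
  ext
  rw [coe_circleCover, coe_neg_sphere, coe_circleCover,
    show 2 * π * ((x + 1 / 2 : ℝ) : ℂ) * I = 2 * π * x * I + π * I by push_cast; ring,
    Complex.exp_add, exp_pi_mul_I, mul_neg_one]

theorem odd_of_lift_of_odd_map {f : S¹ → S¹} (hodd : ∀ z, f (-z) = -f z) {F : ℝ → ℝ}
    (hF : Continuous F) (hlift : circleCover ∘ F = f ∘ circleCover) {d : ℤ}
    (hd : ∀ x, F (x + 1) = F x + d) : Odd d := by
  have hlift' (x : ℝ) : circleCover (F x) = f (circleCover x) := congrFun hlift x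
  have h_half (x : ℝ) : circleCover (F (x + 1 / 2)) = circleCover (F x + 1 / 2) := by
    rw [hlift', circleCover_add_half, hodd, circleCover_add_half, hlift']
  obtain ⟨k, hk⟩ := circleCover_eq_circleCover_iff.1 (h_half 0)
  have h_shift : (fun x ↦ F (x + 1 / 2)) = fun x ↦ F x + 1 / 2 + k :=
    isCoveringMap_circleCover.eq_of_comp_eq (by fun_prop) (by fun_prop)
      (funext fun x ↦ by simp only [comp_apply, circleCover_add_int, h_half]) 0 hk
  have h₀ := congrFun h_shift 0
  have h₁ := congrFun h_shift (1 / 2)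
  have hd₀ := hd 0
  norm_num at h₀ h₁ hd₀
  exact ⟨k, by exact_mod_cast (by linarith : (d : ℝ) = 2 * k + 1)⟩

theorem IsCoveringMap.exists_lift_of_nullhomotopic {E X A : Type*} [TopologicalSpace E]
    [TopologicalSpace X] [TopologicalSpace A] {p : E → X} (hp : IsCoveringMap p)
    (hsurj : Surjective p) {f : C(A, X)} (hf : f.Nullhomotopic) :
    ∃ g : C(A, E), p ∘ g = f := by
  obtain ⟨x, ⟨H⟩⟩ := hf
  obtain ⟨e, rfl⟩ := hsurj x
  let G := hp.liftHomotopy H.symm.toContinuousMap (.const A e) fun a ↦ by simp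
  refine ⟨G.curry 1, funext fun a ↦ ?_⟩
  simpa using congrFun (hp.liftHomotopy_lifts H.symm.toContinuousMap (.const A e) _) (1, a)

/-- **Odd mapping theorem for the circle.** A continuous odd (antipodal) map
`f : S¹ → S¹` has odd degree (where the degree `d` is characterised by any continuous
lift `F` of `f` along `x ↦ exp(2πix)`, satisfying `F(x+1) = F(x) + d`); in particular
`f` is not null-homotopic. -/
theorem odd_circle_map_odd_degree
    (f : C(Metric.sphere (0 : ℂ) 1, Metric.sphere (0 : ℂ) 1))
    (hodd : ∀ z, f (-z) = -f z) :
    (∀ (d : ℤ) (F : ℝ → ℝ), Continuous F →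
        (∀ (x : ℝ) (z : Metric.sphere (0 : ℂ) 1),
          (z : ℂ) = Complex.exp (2 * π * x * Complex.I) →
            ((f z : ℂ)) = Complex.exp (2 * π * F x * Complex.I)) →
        (∀ x : ℝ, F (x + 1) = F x + d) → Odd d) ∧
      ¬f.Nullhomotopic := by
  refine ⟨fun d F hF hlift hd ↦
    odd_of_lift_of_odd_map hodd hF (funext fun x ↦ Subtype.ext (hlift x _ rfl).symm) hd, ?_⟩
  intro hnull
  obtain ⟨g, hg⟩ :=
    isCoveringMap_circleCover.exists_lift_of_nullhomotopic circleCover_surjective hnull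
  have h_periodic (x : ℝ) : g (circleCover (x + 1)) = g (circleCover x) + (0 : ℤ) := by
    simpa using congrArg g (circleCover_add_int x 1)
  exact Int.not_odd_zero <| odd_of_lift_of_odd_map hodd
    (g.continuous.comp isCoveringMap_circleCover.continuous) (by rw [← comp_assoc, hg]) h_periodic
end

section
/- Let S_1,...,S_n be closed subsets of the closed disk B^k with ⋃ S_i = B^k, and suppose the intersection ⋂_{i=1}^n (S_i ∩ S^{k-1}) over the boundary sphere is empty and the induced map f_C : S^{k-1} → ∂Δ^{n-1} ≃ S^{n-2} (built from a partition of unity subordinate to the restricted cover C_i = S_i ∩ S^{k-1}) is not null-homotopic. Then ⋂_{i=1}^n S_i ≠ ∅. -/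
/-- The boundary of the standard simplex `Δ^{n-1}`: points with some vanishing
coordinate. -/
def simplexBoundary (n : ℕ) : Set (Fin n → ℝ) :=
  {y | y ∈ stdSimplex ℝ (Fin n) ∧ ∃ i, y i = 0}

/-- **KKM theorem with general boundary conditions** (Corollary 2.1). Let
`S 1, …, S n` be a closed cover of the disk `B^k` such that the restricted cover of the
boundary sphere has empty total intersection and the induced map
`f_C : S^{k-1} → ∂Δ^{n-1}` (built from a partition of unity subordinate to the sets
`C i = S i ∩ S^{k-1}`) is not null-homotopic. Then all the `S i` have a common point. -/
theorem kkm_boundary_conditions {n k : ℕ}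
    (S : Fin n → Set (EuclideanSpace ℝ (Fin k)))
    (hclosed : ∀ i, IsClosed (S i))
    (hcover : ⋃ i, S i = Metric.closedBall (0 : EuclideanSpace ℝ (Fin k)) 1)
    (hbd : ⋂ i, (S i ∩ Metric.sphere (0 : EuclideanSpace ℝ (Fin k)) 1) = ∅)
    (hhtpy : ∃ φ : Fin n → C(Metric.sphere (0 : EuclideanSpace ℝ (Fin k)) 1, ℝ),
      (∀ i x, 0 ≤ φ i x) ∧ (∀ x, ∑ i, φ i x = 1) ∧
      (∀ i, tsupport (φ i) ⊆ {x | (x : EuclideanSpace ℝ (Fin k)) ∈ S i}) ∧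
      ∃ f : C(Metric.sphere (0 : EuclideanSpace ℝ (Fin k)) 1, simplexBoundary n),
        (∀ x i, ((f x : Fin n → ℝ)) i = φ i x) ∧ ¬f.Nullhomotopic) :
    (⋂ i, S i).Nonempty := by
  classical
  -- trivial case n = 0
  rcases Nat.eq_zero_or_pos n with hn | hn
  · subst hn
    refine ⟨0, ?_⟩
    simp [Set.iInter_of_empty]
  by_contra hne
  rw [Set.not_nonempty_iff_eq_empty] at hne
  obtain ⟨φ, hφ0, hφ1, hφsupp, f, hf, hnull⟩ := hhtpy
  set B : Set (EuclideanSpace ℝ (Fin k)) := Metric.closedBall (0 : (EuclideanSpace ℝ (Fin k))) 1 with hB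
  have hBc : IsCompact B := isCompact_closedBall _ _
  -- the complements of the S i cover B
  have hcov' : B ⊆ ⋃ i, (S i)ᶜ := by
    intro x hx
    by_contra hx'
    simp only [Set.mem_iUnion, Set.mem_compl_iff, not_exists, not_not] at hx'
    have : x ∈ ⋂ i, S i := Set.mem_iInter.2 hx'
    rw [hne] at this
    exact this
  obtain ⟨δ, hδ, hleb⟩ := lebesgue_number_lemma_of_metric hBc
    (fun i => (hclosed i).isOpen_compl) hcov'
  -- the auxiliary bump functions
  set ψ : Fin n → (EuclideanSpace ℝ (Fin k)) → ℝ := fun i x =>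
    if (S i).Nonempty then max (δ - Metric.infDist x (S i)) 0 else 0 with hψ
  have hψcont : ∀ i, Continuous (ψ i) := by
    intro i
    by_cases h : (S i).Nonempty
    · simp only [hψ, if_pos h]
      exact ((continuous_const.sub (Metric.continuous_infDist_pt _)).max continuous_const)
    · simp only [hψ, if_neg h]
      exact continuous_const
  have hψnn : ∀ i x, 0 ≤ ψ i x := by
    intro i x
    by_cases h : (S i).Nonempty <;> simp [hψ, h, le_max_right]
  have hψmem : ∀ i x, x ∈ S i → ψ i x = δ := by
    intro i x hx
    simp [hψ, Set.nonempty_of_mem hx, Metric.infDist_zero_of_mem hx, le_of_lt hδ]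
  -- for every point of B, some ψ i vanishes and the point is outside S i
  have hzero : ∀ x ∈ B, ∃ i, ψ i x = 0 ∧ x ∉ S i := by
    intro x hx
    obtain ⟨i, hi⟩ := hleb x hx
    refine ⟨i, ?_, ?_⟩
    · by_cases h : (S i).Nonempty
      · have hdist : δ ≤ Metric.infDist x (S i) := by
          by_contra hlt
          push_neg at hlt
          obtain ⟨y, hy, hdy⟩ := (Metric.infDist_lt_iff h).1 hlt
          exact (hi (Metric.mem_ball'.2 hdy)) hy
        simp [hψ, h, sub_nonpos.2 hdist]
      · simp [hψ, h]
    · intro hxi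
      exact hi (Metric.mem_ball_self hδ) hxi
  set σ : (EuclideanSpace ℝ (Fin k)) → ℝ := fun x => ∑ i, ψ i x with hσ
  have hσcont : Continuous σ := continuous_finset_sum _ fun i _ => hψcont i
  have hσpos : ∀ x ∈ B, 0 < σ x := by
    intro x hx
    rw [← hcover] at hx
    obtain ⟨i, hi⟩ := Set.mem_iUnion.1 hx
    refine Finset.sum_pos' (fun j _ => hψnn j x) ⟨i, Finset.mem_univ i, ?_⟩
    rw [hψmem i x hi]; exact hδ
  -- the map on the ball
  have hmem : ∀ x : B, (fun i => ψ i (x : (EuclideanSpace ℝ (Fin k))) / σ (x : (EuclideanSpace ℝ (Fin k)))) ∈ simplexBoundary n := by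
    rintro ⟨x, hx⟩
    refine ⟨⟨fun i => div_nonneg (hψnn i x) (hσpos x hx).le, ?_⟩, ?_⟩
    · rw [← Finset.sum_div]
      exact div_self (hσpos x hx).ne'
    · obtain ⟨i, hi, -⟩ := hzero x hx
      exact ⟨i, by simp [hi]⟩
  set FF : C(B, simplexBoundary n) :=
    ⟨fun x => ⟨fun i => ψ i (x : (EuclideanSpace ℝ (Fin k))) / σ (x : (EuclideanSpace ℝ (Fin k))), hmem x⟩, by
      refine Continuous.subtype_mk ?_ _
      refine continuous_pi fun i => ?_
      exact ((hψcont i).comp continuous_subtype_val).div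
        (hσcont.comp continuous_subtype_val)
        (fun x => (hσpos (x : (EuclideanSpace ℝ (Fin k))) x.2).ne')⟩ with hFF
  have hsub : ∀ x : (Metric.sphere (0 : EuclideanSpace ℝ (Fin k)) 1), (x : (EuclideanSpace ℝ (Fin k))) ∈ B := fun x =>
    Metric.sphere_subset_closedBall x.2
  set ι : C((Metric.sphere (0 : EuclideanSpace ℝ (Fin k)) 1), B) := ⟨fun x => ⟨(x : (EuclideanSpace ℝ (Fin k))), hsub x⟩,
    Continuous.subtype_mk continuous_subtype_val _⟩ with hι
  -- ι is nullhomotopic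
  have hι0 : (0 : (EuclideanSpace ℝ (Fin k))) ∈ B := Metric.mem_closedBall_self zero_le_one
  have hιnull : ι.Nullhomotopic := by
    have hmem1 : ∀ (t : unitInterval) (x : (Metric.sphere (0 : EuclideanSpace ℝ (Fin k)) 1)),
        ((1 - (t : ℝ)) • (x : EuclideanSpace ℝ (Fin k))) ∈ B := by
      intro t x
      have hx' : (x : EuclideanSpace ℝ (Fin k)) ∈ Metric.sphere (0 : EuclideanSpace ℝ (Fin k)) 1 := x.2
      have hx : ‖(x : EuclideanSpace ℝ (Fin k))‖ = 1 := mem_sphere_zero_iff_norm.1 hx'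
      have ht0 : (0:ℝ) ≤ 1 - (t : ℝ) := by have := t.2.2; linarith
      have ht1 : (1:ℝ) - (t : ℝ) ≤ 1 := by have := t.2.1; linarith
      rw [hB, Metric.mem_closedBall, dist_zero_right, norm_smul, hx, mul_one,
        Real.norm_eq_abs, abs_of_nonneg ht0]
      exact ht1
    refine ⟨⟨0, hι0⟩, ⟨ContinuousMap.Homotopy.mk
      ⟨fun p => ⟨(1 - (p.1 : ℝ)) • (p.2 : EuclideanSpace ℝ (Fin k)), hmem1 p.1 p.2⟩, ?_⟩ ?_ ?_⟩⟩
    · exact Continuous.subtype_mk ((continuous_const.sub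
        (continuous_subtype_val.comp continuous_fst)).smul
        (continuous_subtype_val.comp continuous_snd)) _
    · intro x; ext1; simp [hι]
    · intro x; ext1; simp
  have hcompnull : (FF.comp ι).Nullhomotopic := hιnull.comp_right FF
  -- straight-line homotopy from f to FF.comp ι
  have hfhom : f.Homotopic (FF.comp ι) := by
    refine ⟨?_⟩
    have hmem2 : ∀ (t : unitInterval) (x : (Metric.sphere (0 : EuclideanSpace ℝ (Fin k)) 1)),
        ((1 - (t : ℝ)) • ((f x : Fin n → ℝ)) + (t : ℝ) • ((FF (ι x) : Fin n → ℝ)))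
          ∈ simplexBoundary n := by
      intro t x
      obtain ⟨⟨hfn, hfs⟩, -⟩ := (f x).2
      obtain ⟨⟨hgn, hgs⟩, -⟩ := (FF (ι x)).2
      have ht0 : (0:ℝ) ≤ (t : ℝ) := t.2.1
      have ht1 : (0:ℝ) ≤ 1 - (t : ℝ) := by have := t.2.2; linarith
      refine ⟨⟨fun i => ?_, ?_⟩, ?_⟩
      · have := hfn i; have := hgn i
        simp only [Pi.add_apply, Pi.smul_apply, smul_eq_mul]
        positivity
      · simp only [Pi.add_apply, Pi.smul_apply, smul_eq_mul]
        rw [Finset.sum_add_distrib, ← Finset.mul_sum, ← Finset.mul_sum, hfs, hgs]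
        ring
      · obtain ⟨i, hi, hout⟩ := hzero (x : (EuclideanSpace ℝ (Fin k))) (hsub x)
        refine ⟨i, ?_⟩
        have h1 : (f x : Fin n → ℝ) i = 0 := by
          rw [hf x i]
          apply image_eq_zero_of_notMem_tsupport
          intro hmemt
          exact hout (hφsupp i hmemt)
        have h2 : (FF (ι x) : Fin n → ℝ) i = 0 := by
          show ψ i ((x : EuclideanSpace ℝ (Fin k))) / σ ((x : EuclideanSpace ℝ (Fin k))) = 0
          rw [hi, zero_div]
        simp [h1, h2]
    refine ContinuousMap.Homotopy.mk
      ⟨fun p => ⟨(1 - (p.1 : ℝ)) • ((f p.2 : Fin n → ℝ))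
        + (p.1 : ℝ) • ((FF (ι p.2) : Fin n → ℝ)), hmem2 p.1 p.2⟩, ?_⟩ ?_ ?_
    · refine Continuous.subtype_mk ?_ _
      have hc1 : Continuous fun p : unitInterval × (Metric.sphere (0 : EuclideanSpace ℝ (Fin k)) 1) => ((f p.2 : Fin n → ℝ)) :=
        continuous_subtype_val.comp (f.continuous.comp continuous_snd)
      have hc2 : Continuous fun p : unitInterval × (Metric.sphere (0 : EuclideanSpace ℝ (Fin k)) 1) => ((FF (ι p.2) : Fin n → ℝ)) :=
        continuous_subtype_val.comp ((FF.comp ι).continuous.comp continuous_snd)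
      exact ((continuous_const.sub
        (continuous_subtype_val.comp continuous_fst)).smul hc1).add
        ((continuous_subtype_val.comp continuous_fst).smul hc2)
    · intro x
      ext1
      simp
    · intro x
      ext1
      simp [ContinuousMap.comp]
  obtain ⟨y, hy⟩ := hcompnull
  exact hnull ⟨y, hfhom.trans hy⟩
end
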